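/- Let α = 1/√2 and T(x,y) = (x/ρ, α + (1 − 1/ρ) y), ρ = √(x²+y²). If (x,y) ∈ P₆, i.e. 0 < x < y ≤ α, and additionally x ≥ ε := (1 − 2^{−1/3})^{3/2}, then (x₁,y₁) = T(x,y) satisfies x < x₁ < α and 0 ≤ y₁ < y. -/

import Mathlib

/-!
For fixed `x`, the function `y ↦ y (1/ρ - 1)` peaks at `y = x^{2/3} √(1 - x^{2/3})` with value
`(1 - x^{2/3})^{3/2}`, which is at most `α` exactly when `x ≥ ε`; this is the inequality `0 ≤ y₁`.
With `t = 2^{-1/6}` (so `t³ = α`, `t² = 2^{-1/3}` and `ε² = (1 - t²)³`) it reduces to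
`y² ≤ ((1 - t²)³ + y²)(t³ + y)²`, whose two sides differ by a multiple of `(y - (t - t³))²`.
The remaining three inequalities say `ρ < 1` and `x < αρ < y`, the latter because `αρ = √((x² + y²)/2)` is the quadratic mean of `x` and `y`.
-/

open Real

lemma lt_sqrt_add_sq_div_two {x y : ℝ} (hx : 0 ≤ x) (hxy : x < y) :
    x < √((x ^ 2 + y ^ 2) / 2) :=
  (lt_sqrt hx).2 (by nlinarith)

lemma sqrt_add_sq_div_two_lt {x y : ℝ} (hx : 0 ≤ x) (hxy : x < y) :
    √((x ^ 2 + y ^ 2) / 2) < y :=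
  (sqrt_lt' (hx.trans_lt hxy)).2 (by nlinarith)

lemma sq_le_one_sub_sq_pow_three_add_sq_mul {t y : ℝ} (ht₀ : 0 ≤ t) (ht₁ : t ≤ 1) (hy : 0 ≤ y) :
    y ^ 2 ≤ ((1 - t ^ 2) ^ 3 + y ^ 2) * (t ^ 3 + y) ^ 2 := by
  have factor : ((1 - t ^ 2) ^ 3 + y ^ 2) * (t ^ 3 + y) ^ 2 - y ^ 2 =
      (y + t ^ 3 - t) ^ 2 * (y ^ 2 + 2 * t * y + t ^ 4 * (1 - t ^ 2)) := by ring
  have : 0 ≤ 1 - t ^ 2 := by nlinarith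
  have : 0 ≤ (y + t ^ 3 - t) ^ 2 * (y ^ 2 + 2 * t * y + t ^ 4 * (1 - t ^ 2)) := by positivity
  linarith

lemma le_sqrt_sq_add_sq_mul_pow_three_add {t x y : ℝ} (ht₀ : 0 ≤ t) (ht₁ : t ≤ 1) (hy : 0 ≤ y)
    (hx : (1 - t ^ 2) ^ 3 ≤ x ^ 2) :
    y ≤ √(x ^ 2 + y ^ 2) * (t ^ 3 + y) := by
  refine (pow_le_pow_iff_left₀ hy (by positivity) two_ne_zero).1 ?_
  rw [mul_pow, sq_sqrt (by positivity)]
  calc y ^ 2 ≤ ((1 - t ^ 2) ^ 3 + y ^ 2) * (t ^ 3 + y) ^ 2 :=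
        sq_le_one_sub_sq_pow_three_add_sq_mul ht₀ ht₁ hy
    _ ≤ (x ^ 2 + y ^ 2) * (t ^ 3 + y) ^ 2 := by gcongr

lemma two_rpow_neg_one_div_six_sq : ((2 : ℝ) ^ (-(1 : ℝ) / 6)) ^ 2 = 2 ^ (-(1 : ℝ) / 3) := by
  rw [← rpow_mul_natCast (by norm_num)]
  norm_num

lemma two_rpow_neg_one_div_six_pow_three : ((2 : ℝ) ^ (-(1 : ℝ) / 6)) ^ 3 = 1 / √2 := by
  rw [← rpow_mul_natCast (by norm_num), sqrt_eq_rpow, one_div, ← rpow_neg (by norm_num)]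
  norm_num

lemma rpow_three_div_two_sq {a : ℝ} (ha : 0 ≤ a) : (a ^ ((3 : ℝ) / 2)) ^ 2 = a ^ 3 := by
  rw [← rpow_mul_natCast ha, ← rpow_natCast]
  norm_num

/-- If (x,y) ∈ P₆ = {0 < x < y ≤ α} and x ≥ ε = (1 − 2^{−1/3})^{3/2}, then
T(x,y) = (x₁,y₁) satisfies x < x₁ < α and 0 ≤ y₁ < y. -/
theorem stmt9 (x y : ℝ) (hx : 0 < x) (hxy : x < y) (hyα : y ≤ 1 / Real.sqrt 2)
    (hε : ((1:ℝ) - 2 ^ (-(1:ℝ)/3)) ^ ((3:ℝ)/2) ≤ x) :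
    let α : ℝ := 1 / Real.sqrt 2
    let ρ : ℝ := Real.sqrt (x ^ 2 + y ^ 2)
    let x₁ : ℝ := x / ρ
    let y₁ : ℝ := α + (1 - 1 / ρ) * y
    x < x₁ ∧ x₁ < α ∧ 0 ≤ y₁ ∧ y₁ < y := by
  intro α ρ x₁ y₁
  set t : ℝ := 2 ^ (-(1 : ℝ) / 6)
  have ht₀ : 0 ≤ t := by positivity
  have ht₁ : t ≤ 1 := rpow_le_one_of_one_le_of_nonpos (by norm_num) (by norm_num)
  have hα : α = t ^ 3 := two_rpow_neg_one_div_six_pow_three.symm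
  have hε₀ : 0 ≤ 1 - t ^ 2 := by nlinarith
  have hεx : (1 - t ^ 2) ^ 3 ≤ x ^ 2 := by
    rw [← two_rpow_neg_one_div_six_sq] at hε
    rw [← rpow_three_div_two_sq hε₀]
    exact pow_le_pow_left₀ (rpow_nonneg hε₀ _) hε 2
  have hρ : 0 < ρ := sqrt_pos.2 (by positivity)
  have hρ₁ : ρ < 1 := by
    have : y ^ 2 ≤ 1 / 2 := by
      calc y ^ 2 ≤ (1 / √2) ^ 2 := pow_le_pow_left₀ (hx.trans hxy).le hyα 2
        _ = 1 / 2 := by rw [div_pow, sq_sqrt zero_le_two, one_pow]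
    exact (sqrt_lt' one_pos).2 (by nlinarith)
  have hαρ : α * ρ = √((x ^ 2 + y ^ 2) / 2) := by
    rw [sqrt_div' _ zero_le_two]
    ring
  have hy₁ : y₁ = α + y - y / ρ := by ring
  refine ⟨(lt_div_iff₀ hρ).2 (mul_lt_of_lt_one_right hx hρ₁), (div_lt_iff₀ hρ).2 ?_, ?_, ?_⟩
  · rw [hαρ]
    exact lt_sqrt_add_sq_div_two hx.le hxy
  · have : y / ρ ≤ α + y := (div_le_iff₀ hρ).2 <| by
      rw [mul_comm, hα]
      exact le_sqrt_sq_add_sq_mul_pow_three_add ht₀ ht₁ (hx.trans hxy).le hεx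
    linarith
  · have : α < y / ρ := (lt_div_iff₀ hρ).2 <| by
      rw [hαρ]
      exact sqrt_add_sq_div_two_lt hx.le hxy
    linarith
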